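/- arXiv:math/9401212 — 2 statements merged into one kernel-verified Lean document; each statement's English description precedes it below -/
import Mathlib

section
/- Suppose I is a κ-complete ideal over κ such that P(κ)/I is a complete Boolean algebra, γ ≤ κ, and A is a maximal antichain with respect to I together with an assignment A ↦ ξ_A ∈ γ. Then there exists a partition {B_ξ : ξ < γ} of κ such that for each ξ < γ, [B_ξ]_I = ⋁{[A]_I : A ∈ A, ξ_A = ξ} in P(κ)/I. -/
/-!
Pick representatives `Z ξ` of the suprema `⋁ {[A] : f A = ξ}`. By the infinite distributive law
of `P(κ)/I`, `Z ξ ∩ Z ζ ∈ I` for `ξ ≠ ζ`, and by maximality of the antichain the `Z ξ` cover `κ`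
up to a null set, which may be added to every `Z ξ`. Well-order `γ` in order type `|γ|` and put
`B ξ = Z ξ \ ⋃_{ζ < ξ} Z ζ`: what is removed is a union of fewer than `κ` null sets `Z ξ ∩ Z ζ`,
so `[B ξ] = [Z ξ]`, and the `B ξ` partition `κ`.

For finite `κ` (where, for `κ = 2`, a union of two null sets need not be null) the null sets are
exactly the proper subsets, so some `A ∈ 𝒜` with `f A = ξ₀` is all of `κ`, and `B ξ₀ = κ` works.
-/

universe u

/-- A proper, κ-complete ideal on `P(κ)` (κ realized as the type `α`)
containing all singletons. -/
structure IdealOver (α : Type u) where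
  carrier : Set (Set α)
  proper : Set.univ ∉ carrier
  downward : ∀ {A B : Set α}, A ⊆ B → B ∈ carrier → A ∈ carrier
  singleton_mem : ∀ x : α, {x} ∈ carrier
  complete : ∀ s : Set (Set α), Cardinal.mk ↥s < Cardinal.mk α → s ⊆ carrier →
    ⋃₀ s ∈ carrier

/-- `𝒜` is an antichain with respect to `I`. -/
def IsAntichainFor {α : Type u} (I : IdealOver α) (𝒜 : Set (Set α)) : Prop :=
  (∀ A ∈ 𝒜, A ∉ I.carrier) ∧ ∀ A ∈ 𝒜, ∀ B ∈ 𝒜, A ≠ B → A ∩ B ∈ I.carrier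

/-- `[Z]` is a least upper bound of `{[A] : A ∈ F}` in `P(α)/I`, where
`[A] ≤ [B]` iff `A \ B ∈ I`. -/
def IsSupFor {α : Type u} (I : IdealOver α) (F : Set (Set α)) (Z : Set α) : Prop :=
  (∀ A ∈ F, A \ Z ∈ I.carrier) ∧
    ∀ W : Set α, (∀ A ∈ F, A \ W ∈ I.carrier) → Z \ W ∈ I.carrier

/-- The quotient Boolean algebra `P(α)/I` is complete. -/
def QuotComplete {α : Type u} (I : IdealOver α) : Prop :=
  ∀ F : Set (Set α), ∃ Z : Set α, IsSupFor I F Z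

open Set
open scoped Cardinal Ordinal

/-- Unlike `disjointed`, this needs no local finiteness of the index order. -/
def wellDisjointed {ι β : Type*} [Preorder ι] (Z : ι → Set β) (i : ι) : Set β :=
  Z i \ ⋃ j : Iio i, Z j

section WellDisjointed

variable {ι β : Type*} (Z : ι → Set β)

lemma wellDisjointed_subset [Preorder ι] (i : ι) : wellDisjointed Z i ⊆ Z i :=
  sdiff_subset

lemma diff_wellDisjointed [Preorder ι] (i : ι) :
    Z i \ wellDisjointed Z i = ⋃ j : Iio i, Z i ∩ Z j := by
  rw [wellDisjointed, sdiff_sdiff_right_self, inter_iUnion]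

lemma pairwise_disjoint_wellDisjointed [LinearOrder ι] :
    Pairwise fun i j => Disjoint (wellDisjointed Z i) (wellDisjointed Z j) := by
  refine (pairwise_disjoint_on _).2 fun i j hij => disjoint_left.2 fun x hi hj => ?_
  exact hj.2 (mem_iUnion.2 ⟨⟨i, hij⟩, hi.1⟩)

lemma iUnion_wellDisjointed [LinearOrder ι] [WellFoundedLT ι] :
    ⋃ i, wellDisjointed Z i = ⋃ i, Z i := by
  refine (iUnion_mono fun i => wellDisjointed_subset Z i).antisymm fun x hx => ?_
  obtain ⟨i, hi, hmin⟩ := wellFounded_lt.has_min {i | x ∈ Z i} (mem_iUnion.1 hx)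
  exact mem_iUnion.2 ⟨i, hi, fun hx' =>
    let ⟨j, hj⟩ := mem_iUnion.1 hx'
    hmin j hj j.2⟩

end WellDisjointed

namespace IdealOver

variable {α : Type u} (I : IdealOver α)

lemma iUnion_mem {β : Type u} {s : β → Set α} (hβ : #β < #α) (hs : ∀ b, s b ∈ I.carrier) :
    ⋃ b, s b ∈ I.carrier := by
  rw [← sUnion_range]
  exact I.complete _ (Cardinal.mk_range_le.trans_lt hβ) (range_subset_iff.2 hs)

lemma mem_of_ne_univ [Finite α] {A : Set α} (hA : A ≠ univ) : A ∈ I.carrier := by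
  have hcard : #A < #α := Cardinal.mk_univ (α := α) ▸
    Cardinal.card_lt_card_of_right_finite (toFinite univ) (ssubset_univ_iff.2 hA)
  rw [← iUnion_of_singleton_coe A]
  exact I.iUnion_mem hcard fun x => I.singleton_mem x

variable (hinf : ℵ₀ ≤ #α)
include hinf

lemma union_mem {A B : Set α} (hA : A ∈ I.carrier) (hB : B ∈ I.carrier) :
    A ∪ B ∈ I.carrier := by
  rw [← sUnion_pair]
  refine I.complete _ ((toFinite _).lt_aleph0.trans_le hinf) ?_
  rintro X (rfl | rfl) <;> assumption

lemma diff_mem_trans {A B C : Set α} (hAB : A \ B ∈ I.carrier) (hBC : B \ C ∈ I.carrier) :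
    A \ C ∈ I.carrier :=
  I.downward (sdiff_triangle A B C) (I.union_mem hinf hAB hBC)

end IdealOver

section IsSupFor

variable {α : Type u} {I : IdealOver α}

lemma QuotComplete.empty_mem (hcomp : QuotComplete I) : ∅ ∈ I.carrier :=
  let ⟨_, hZ⟩ := hcomp {univ}
  I.downward (empty_subset _) (hZ.1 univ rfl)

lemma IsSupFor.of_equiv (hinf : ℵ₀ ≤ #α) {F : Set (Set α)} {Z Z' : Set α} (h : IsSupFor I F Z)
    (h₁ : Z \ Z' ∈ I.carrier) (h₂ : Z' \ Z ∈ I.carrier) : IsSupFor I F Z' :=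
  ⟨fun A hA => I.diff_mem_trans hinf (h.1 A hA) h₁,
    fun W hW => I.diff_mem_trans hinf h₂ (h.2 W hW)⟩

/-- The infinite distributive law `(⋁ F) ∧ (⋁ G) = ⋁ {A ∧ B}` of the complete algebra, in the
case where all the meets `A ∧ B` vanish. -/
lemma IsSupFor.inter_mem {F G : Set (Set α)} {Z W : Set α} (hZ : IsSupFor I F Z)
    (hW : IsSupFor I G W) (hFG : ∀ A ∈ F, ∀ B ∈ G, A ∩ B ∈ I.carrier) :
    Z ∩ W ∈ I.carrier := by
  have hAW : ∀ A ∈ F, A \ Wᶜ ∈ I.carrier := fun A hA => by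
    have := hW.2 Aᶜ fun B hB => by rw [sdiff_compl, inter_comm]; exact hFG A hA B hB
    rwa [sdiff_compl, inter_comm, ← sdiff_compl]
  simpa only [sdiff_compl] using hZ.2 Wᶜ hAW

end IsSupFor

namespace IdealOver

variable {α ι : Type u} (I : IdealOver α) (F : ι → Set (Set α))

lemma exists_isSupFor_iUnion_eq_univ (hinf : ℵ₀ ≤ #α) (hcomp : QuotComplete I) [Nonempty ι]
    (hcover : ∀ Z : Set α, (∀ ξ, ∀ A ∈ F ξ, A \ Z ∈ I.carrier) → univ \ Z ∈ I.carrier) :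
    ∃ Z : ι → Set α, ⋃ ξ, Z ξ = univ ∧ ∀ ξ, IsSupFor I (F ξ) (Z ξ) := by
  choose Z hZ using fun ξ => hcomp (F ξ)
  set R := univ \ ⋃ ξ, Z ξ
  have hR : R ∈ I.carrier := hcover _ fun ξ A hA =>
    I.downward (sdiff_subset_sdiff_right (subset_iUnion Z ξ)) ((hZ ξ).1 A hA)
  refine ⟨fun ξ => Z ξ ∪ R, by rw [← iUnion_union, union_sdiff_self, union_univ], fun ξ => ?_⟩
  refine (hZ ξ).of_equiv hinf (I.downward ?_ hR) (I.downward ?_ hR)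
  · exact (sdiff_eq_empty.2 subset_union_left).subset.trans (empty_subset R)
  · exact union_sdiff_left.subset.trans sdiff_subset

lemma isSupFor_wellDisjointed [LinearOrder ι] [WellFoundedLT ι] (hinf : ℵ₀ ≤ #α)
    (hι : #ι ≤ #α) (hord : (#ι).ord = typeLT ι)
    (hdisj : ∀ ξ ζ, ξ ≠ ζ → ∀ A ∈ F ξ, ∀ B ∈ F ζ, A ∩ B ∈ I.carrier)
    {Z : ι → Set α} (hZ : ∀ ξ, IsSupFor I (F ξ) (Z ξ)) (ξ : ι) :
    IsSupFor I (F ξ) (wellDisjointed Z ξ) := by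
  have hdiff : Z ξ \ wellDisjointed Z ξ ∈ I.carrier := by
    rw [diff_wellDisjointed]
    refine I.iUnion_mem ((Cardinal.mk_Iio_lt ξ hord).trans_le hι) fun ζ => ?_
    exact (hZ ξ).inter_mem (hZ ζ) (hdisj ξ ζ (ne_of_gt ζ.2))
  refine (hZ ξ).of_equiv hinf hdiff (I.downward ?_ hdiff)
  rw [sdiff_eq_empty.2 (wellDisjointed_subset Z ξ)]
  exact empty_subset _

variable (hcomp : QuotComplete I)
  (hdisj : ∀ ξ ζ, ξ ≠ ζ → ∀ A ∈ F ξ, ∀ B ∈ F ζ, A ∩ B ∈ I.carrier)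
  (hcover : ∀ Z : Set α, (∀ ξ, ∀ A ∈ F ξ, A \ Z ∈ I.carrier) → univ \ Z ∈ I.carrier)
include hcomp hdisj hcover

lemma exists_partition_isSupFor_of_finite [Finite α] :
    ∃ B : ι → Set α, (univ = ⋃ ξ, B ξ) ∧ (Pairwise fun ξ ζ => Disjoint (B ξ) (B ζ)) ∧
      ∀ ξ, IsSupFor I (F ξ) (B ξ) := by
  classical
  obtain ⟨ξ₀, huniv⟩ : ∃ ξ₀, univ ∈ F ξ₀ := by
    by_contra! h
    refine I.proper (Set.sdiff_empty (s := univ) ▸ hcover ∅ fun ξ A hA => ?_)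
    exact Set.sdiff_empty.symm ▸ I.mem_of_ne_univ (by rintro rfl; exact h ξ hA)
  refine ⟨fun ξ => if ξ = ξ₀ then univ else ∅, ?_, ?_, fun ξ => ?_⟩
  · exact (eq_univ_of_forall fun x => mem_iUnion.2 ⟨ξ₀, by simp⟩).symm
  · intro ξ ζ hξζ
    by_cases hξ : ξ = ξ₀ <;> by_cases hζ : ζ = ξ₀ <;> simp_all
  · by_cases hξ : ξ = ξ₀
    · subst hξ
      simp only [↓reduceIte]
      refine ⟨fun A _ => ?_, fun W hW => hW univ huniv⟩
      rw [Set.sdiff_univ]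
      exact hcomp.empty_mem
    · simp only [if_neg hξ]
      refine ⟨fun A hA => ?_, fun W _ => ?_⟩
      · rw [Set.sdiff_empty]
        refine I.mem_of_ne_univ ?_
        rintro rfl
        exact I.proper (inter_self univ ▸ hdisj ξ ξ₀ hξ univ hA univ huniv)
      · rw [Set.empty_sdiff]
        exact hcomp.empty_mem

lemma exists_partition_isSupFor_of_aleph0_le (hinf : ℵ₀ ≤ #α) (hι : #ι ≤ #α) :
    ∃ B : ι → Set α, (univ = ⋃ ξ, B ξ) ∧ (Pairwise fun ξ ζ => Disjoint (B ξ) (B ζ)) ∧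
      ∀ ξ, IsSupFor I (F ξ) (B ξ) := by
  have : Nonempty ι := by
    by_contra! h
    exact I.proper (by simpa using hcover ∅ fun ξ => isEmptyElim ξ)
  obtain ⟨Z, hZuniv, hZ⟩ := I.exists_isSupFor_iUnion_eq_univ F hinf hcomp hcover
  obtain ⟨_, _, hord⟩ := Cardinal.exists_ord_eq_type_lt ι
  refine ⟨wellDisjointed Z, ?_, pairwise_disjoint_wellDisjointed Z,
    I.isSupFor_wellDisjointed F hinf hι hord hdisj hZ⟩
  rw [iUnion_wellDisjointed, hZuniv]

theorem exists_partition_isSupFor (hι : #ι ≤ #α) :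
    ∃ B : ι → Set α, (univ = ⋃ ξ, B ξ) ∧ (Pairwise fun ξ ζ => Disjoint (B ξ) (B ζ)) ∧
      ∀ ξ, IsSupFor I (F ξ) (B ξ) := by
  rcases finite_or_infinite α with hα | hα
  · exact I.exists_partition_isSupFor_of_finite F hcomp hdisj hcover
  · exact I.exists_partition_isSupFor_of_aleph0_le F hcomp hdisj hcover
      (Cardinal.infinite_iff.1 hα) hι

end IdealOver

/-- given a maximal antichain `𝒜` with respect to `I` together
with an assignment `f : 𝒜 → ι` (with `#ι ≤ κ`, playing the role of `γ ≤ κ`),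
there is a partition `{B ξ : ξ ∈ ι}` of `κ` such that `[B ξ]` is the supremum
of `{[A] : A ∈ 𝒜, f A = ξ}` in `P(κ)/I`. -/
theorem stmt4 {α ι : Type u} (I : IdealOver α) (hcomp : QuotComplete I)
    (hι : Cardinal.mk ι ≤ Cardinal.mk α)
    (𝒜 : Set (Set α)) (hanti : IsAntichainFor I 𝒜)
    (hmax : ∀ Z : Set α, (∀ A ∈ 𝒜, A \ Z ∈ I.carrier) → Set.univ \ Z ∈ I.carrier)
    (f : Set α → ι) :
    ∃ B : ι → Set α,
      (Set.univ = ⋃ ξ, B ξ) ∧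
      (Pairwise fun ξ ζ => Disjoint (B ξ) (B ζ)) ∧
      ∀ ξ : ι, IsSupFor I {A | A ∈ 𝒜 ∧ f A = ξ} (B ξ) := by
  refine I.exists_partition_isSupFor (fun ξ => {A | A ∈ 𝒜 ∧ f A = ξ}) hcomp ?_ ?_ hι
  · rintro ξ ζ hξζ A ⟨hA, rfl⟩ B ⟨hB, rfl⟩
    exact hanti.2 A hA B hB (by rintro rfl; exact hξζ rfl)
  · exact fun Z hZ => hmax Z fun A hA => hZ (f A) A ⟨hA, rfl⟩
end

section
/- If CH holds and there is an ω₂-saturated κ-complete ideal over ω₁ whose quotient P(ω₁)/I is complete, then 2^{ω₁} = ω₂. -/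
universe u

/-!
Ketonen's argument. Under CH there are only `ℵ₁` countable subsets of `ω₁`, so coding `X ∩ ξ`
for `ξ < ω₁` turns each `X ⊆ ω₁` into a function `ω₁ → ω₁`; distinct sets give functions that
agree only on a bounded, hence null, set. By saturation, at most `ℵ₁` of these functions lie
below a fixed `g` on a positive set: record the position of `f ξ` among the countably many
predecessors of `g ξ`; for a fixed position the resulting positive sets form an antichain.
If there were more than `ℵ₂` functions, take `ℵ₂` of them and a further `g` that lies below none
of them on a positive set; by almost disjointness all `ℵ₂` then lie below `g` almost everywhere.
-/

open Cardinal Set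

theorem Cardinal.mk_iUnion_le_of_countable {β : Type u} {ι : Type*} [Countable ι]
    {s : ι → Set β} {κ : Cardinal.{u}} (hκ : ℵ₀ ≤ κ) (hs : ∀ i, #(s i) ≤ κ) :
    #(⋃ i, s i) ≤ κ := by
  rw [← lift_le]
  refine (mk_iUnion_le_lift s).trans ?_
  calc lift #ι * ⨆ i, lift #(s i) ≤ lift κ * lift κ :=
        mul_le_mul' ((lift_le_aleph0.mpr mk_le_aleph0).trans (aleph0_le_lift.mpr hκ))
          (ciSup_le' fun i => lift_le.mpr (hs i))
    _ = lift κ := mul_eq_self (aleph0_le_lift.mpr hκ)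

theorem Cardinal.mk_setOf_countable_le_of_continuum_eq {γ : Type u} (hγ : #γ = ℵ₁)
    (hCH : (2 : Cardinal.{u}) ^ ℵ₀ = ℵ₁) : #{s : Set γ // s.Countable} ≤ ℵ₁ :=
  calc #{s : Set γ // s.Countable} ≤ max #γ ℵ₀ ^ ℵ₀ := by
        simpa only [le_aleph0_iff_set_countable] using mk_bounded_set_le γ ℵ₀
    _ = ℵ₁ := by
        rw [hγ, max_eq_left (aleph0_le_aleph 1), ← hCH, ← power_mul, aleph0_mul_aleph0]

def initialSegmentCode {γ β : Type*} [Preorder γ] (hγ : ∀ c : γ, (Iio c).Countable)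
    (code : {s : Set γ // s.Countable} ↪ β) (X : Set γ) (ξ : γ) : β :=
  code ⟨X ∩ Iio ξ, (hγ ξ).mono inter_subset_right⟩

theorem countable_setOf_initialSegmentCode_eq {γ β : Type*} [LinearOrder γ]
    (hγ : ∀ c : γ, (Iio c).Countable) (code : {s : Set γ // s.Countable} ↪ β) {X Y : Set γ}
    (hXY : X ≠ Y) :
    {ξ | initialSegmentCode hγ code X ξ = initialSegmentCode hγ code Y ξ}.Countable := by
  obtain ⟨x, hx⟩ : ∃ x, ¬(x ∈ X ↔ x ∈ Y) := by simpa [Set.ext_iff] using hXY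
  refine ((hγ x).insert x).mono fun ξ hξ => ?_
  rw [Iio_insert, mem_Iic]
  by_contra! hxξ
  have hseg : X ∩ Iio ξ = Y ∩ Iio ξ := congrArg Subtype.val (code.injective hξ)
  exact hx (by simpa [hxξ] using congrArg (x ∈ ·) hseg)

namespace IdealOver

variable {α : Type u} (I : IdealOver α)

theorem iUnion_mem_of_countable (hα : ℵ₀ < #α) {ι : Sort*} [Countable ι] {s : ι → Set α}
    (hs : ∀ i, s i ∈ I.carrier) : (⋃ i, s i) ∈ I.carrier := by
  rw [← sUnion_range]
  refine I.complete _ ((le_aleph0_iff_set_countable.mpr (countable_range s)).trans_lt hα) ?_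
  rintro _ ⟨i, rfl⟩
  exact hs i

theorem union_mem_s19 (hα : ℵ₀ < #α) {s t : Set α} (hs : s ∈ I.carrier) (ht : t ∈ I.carrier) :
    s ∪ t ∈ I.carrier := by
  rw [union_eq_iUnion]
  exact I.iUnion_mem_of_countable hα (by rintro (_ | _) <;> assumption)

theorem mem_of_countable (hα : ℵ₀ < #α) {s : Set α} (hs : s.Countable) : s ∈ I.carrier := by
  have := hs.to_subtype
  rw [← biUnion_of_singleton s, biUnion_eq_iUnion]
  exact I.iUnion_mem_of_countable hα fun x => I.singleton_mem x

theorem mk_le_of_pairwise_inter_mem {κ : Cardinal.{u}}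
    (hsat : ∀ 𝒜 : Set (Set α), IsAntichainFor I 𝒜 → #𝒜 ≤ κ) {ι : Type u} {P : ι → Set α}
    (hP : ∀ i, P i ∉ I.carrier) (hdisj : Pairwise fun i j => P i ∩ P j ∈ I.carrier) :
    #ι ≤ κ := by
  have hinj : Function.Injective P := fun i j hij => by
    by_contra hne
    exact hP i (by simpa [hij] using hdisj hne)
  rw [← mk_range_eq P hinj]
  refine hsat _ ⟨?_, ?_⟩
  · rintro _ ⟨i, rfl⟩
    exact hP i
  · rintro _ ⟨i, rfl⟩ _ ⟨j, rfl⟩ hne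
    exact hdisj (ne_of_apply_ne P hne)

variable {β : Type*} {ι : Type*}

def IsAlmostDisjoint (F : ι → α → β) : Prop :=
  Pairwise fun i j => {ξ | F i ξ = F j ξ} ∈ I.carrier

def LtOnPositive [LT β] (f g : α → β) : Prop :=
  {ξ | f ξ < g ξ} ∉ I.carrier

theorem ltOnPositive_or_ltOnPositive [LinearOrder β] (hα : ℵ₀ < #α) {f g : α → β}
    (hfg : {ξ | f ξ = g ξ} ∈ I.carrier) : I.LtOnPositive f g ∨ I.LtOnPositive g f := by
  by_contra! h
  simp only [LtOnPositive, not_not] at h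
  refine I.proper (I.downward (fun ξ _ => ?_) (I.union_mem_s19 hα (I.union_mem_s19 hα h.1 hfg) h.2))
  rcases lt_trichotomy (f ξ) (g ξ) with h | h | h
  exacts [Or.inl (Or.inl h), Or.inl (Or.inr h), Or.inr h]

theorem mk_setOf_ltOnPositive_le (hα : ℵ₀ < #α) {κ : Cardinal.{u}} (hκ : ℵ₀ ≤ κ)
    (hsat : ∀ 𝒜 : Set (Set α), IsAntichainFor I 𝒜 → #𝒜 ≤ κ) [Preorder β]
    (hβ : ∀ c : β, (Iio c).Countable) {ι : Type u} {F : ι → α → β}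
    (hF : I.IsAlmostDisjoint F) (g : α → β) :
    #{i | I.LtOnPositive (F i) g} ≤ κ := by
  choose rank hrank using fun c => countable_iff_exists_injOn.mp (hβ c)
  -- `rank c` is injective on `Iio c`, so pieces of distinct `i` with the same `n` meet only
  -- where `F i` and `F j` agree.
  set piece : ι → ℕ → Set α := fun i n => {ξ | F i ξ < g ξ ∧ rank (g ξ) (F i ξ) = n}
  have hsub : {i | I.LtOnPositive (F i) g} ⊆ ⋃ n, {i | piece i n ∉ I.carrier} := by
    intro i hi
    by_contra! h
    simp only [mem_iUnion, mem_ofPred_eq, not_exists, not_not] at h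
    refine hi ?_
    convert I.iUnion_mem_of_countable hα h using 1
    ext ξ
    simp [piece]
  refine (mk_le_mk_of_subset hsub).trans (mk_iUnion_le_of_countable hκ fun n => ?_)
  refine I.mk_le_of_pairwise_inter_mem hsat
    (P := fun i : {i | piece i n ∉ I.carrier} => piece i n) (fun i => i.2)
    fun i j hij => I.downward ?_ (hF (Subtype.coe_ne_coe.mpr hij))
  rintro ξ ⟨⟨hi, hin⟩, hj, hjn⟩
  exact hrank (g ξ) hi hj (hin.trans hjn.symm)

theorem mk_le_succ_of_isAlmostDisjoint (hα : ℵ₀ < #α) {κ : Cardinal.{u}} (hκ : ℵ₀ ≤ κ)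
    (hsat : ∀ 𝒜 : Set (Set α), IsAntichainFor I 𝒜 → #𝒜 ≤ κ) [LinearOrder β]
    (hβ : ∀ c : β, (Iio c).Countable) {ι : Type u} {F : ι → α → β}
    (hF : I.IsAlmostDisjoint F) : #ι ≤ Order.succ κ := by
  have hsucc : ℵ₀ ≤ Order.succ κ := hκ.trans (Order.le_succ κ)
  have below_le : ∀ j, #{i | I.LtOnPositive (F i) (F j)} ≤ κ :=
    fun j => I.mk_setOf_ltOnPositive_le hα hκ hsat hβ hF (F j)
  by_contra! hlt
  obtain ⟨A, hA⟩ := le_mk_iff_exists_set.mp hlt.le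
  set S := A ∪ ⋃ j ∈ A, {i | I.LtOnPositive (F i) (F j)}
  have hS : #S ≤ Order.succ κ := by
    refine (mk_union_le _ _).trans ((add_le_add hA.le ?_).trans (add_eq_self hsucc).le)
    refine (mk_biUnion_le _ A).trans ?_
    rw [hA]
    have hsup : ⨆ j : A, #{i | I.LtOnPositive (F i) (F j)} ≤ Order.succ κ :=
      (ciSup_le' fun j : A => below_le j.1).trans (Order.le_succ κ)
    exact (mul_le_mul' le_rfl hsup).trans (mul_eq_self hsucc).le
  obtain ⟨Z, hZ⟩ : ∃ Z, Z ∉ S := by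
    by_contra! h
    exact hlt.not_ge (mk_univ.symm.le.trans ((mk_le_mk_of_subset fun Z _ => h Z).trans hS))
  have hAZ : A ⊆ {i | I.LtOnPositive (F i) (F Z)} := fun X hX =>
    have hXZ : X ≠ Z := ne_of_mem_of_not_mem hX fun h => hZ (Or.inl h)
    (I.ltOnPositive_or_ltOnPositive hα (hF hXZ)).resolve_right
      fun h => hZ (Or.inr (mem_biUnion hX h))
  exact (Order.lt_succ_of_le (below_le Z)).not_ge (hA ▸ mk_le_mk_of_subset hAZ)

end IdealOver

theorem stmt19_general {α : Type} (I : IdealOver α)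
    (hα : Cardinal.mk α = Cardinal.aleph 1)
    (hCH : (2 : Cardinal.{0}) ^ Cardinal.aleph0 = Cardinal.aleph 1)
    (hsat : ∀ 𝒜 : Set (Set α), IsAntichainFor I 𝒜 →
      Cardinal.mk ↥𝒜 ≤ Cardinal.aleph 1) :
    (2 : Cardinal.{0}) ^ Cardinal.aleph 1 = Cardinal.aleph 2 := by
  let ω₁ := (ℵ₁ : Cardinal.{0}).ord.ToType
  have hω₁ : #ω₁ = ℵ₁ := mk_ord_toType _
  have hIio : ∀ c : ω₁, (Iio c).Countable := fun c =>
    le_aleph0_iff_set_countable.mp (lt_aleph_one_iff.mp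
      ((mk_Iio_lt c (by rw [mk_ord_toType, Ordinal.type_toType])).trans_eq hω₁))
  obtain ⟨code⟩ : Nonempty ({s : Set ω₁ // s.Countable} ↪ ω₁) :=
    le_def _ _ |>.mp ((mk_setOf_countable_le_of_continuum_eq hω₁ hCH).trans hω₁.ge)
  obtain ⟨e⟩ : Nonempty (α ≃ ω₁) := Cardinal.eq.mp (hα.trans hω₁.symm)
  have hα' : ℵ₀ < #α := hα ▸ aleph0_lt_aleph_one
  have hF : I.IsAlmostDisjoint fun X : Set ω₁ => initialSegmentCode hIio code X ∘ e :=
    fun X Y hXY => I.mem_of_countable hα'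
      ((countable_setOf_initialSegmentCode_eq hIio code hXY).preimage e.injective)
  have hω₂ : Order.succ ℵ₁ = ℵ_ 2 := by rw [succ_aleph, one_add_one_eq_two]
  have hle := I.mk_le_succ_of_isAlmostDisjoint hα' (aleph0_le_aleph 1) hsat hIio hF
  rw [mk_set, hω₁, hω₂] at hle
  exact hle.antisymm (hω₂ ▸ Order.succ_le_of_lt (cantor ℵ₁))

/-- Ketonen, in the setting of the paper: if CH holds and there
is an `ω₂`-saturated ω₁-complete ideal over `ω₁` whose quotient is complete,
then `2^{ω₁} = ω₂`. -/
theorem stmt19 {α : Type} (I : IdealOver α)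
    (hα : Cardinal.mk α = Cardinal.aleph 1)
    (hCH : (2 : Cardinal.{0}) ^ Cardinal.aleph0 = Cardinal.aleph 1)
    (hsat : ∀ 𝒜 : Set (Set α), IsAntichainFor I 𝒜 →
      Cardinal.mk ↥𝒜 ≤ Cardinal.aleph 1)
    (hcomp : QuotComplete I) :
    (2 : Cardinal.{0}) ^ Cardinal.aleph 1 = Cardinal.aleph 2 :=
  stmt19_general I hα hCH hsat
end
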